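/- Let N ≥ 2, let A be a Hermitian N×N complex matrix with τ = tr A, let v ∈ ℂ^N be a unit vector with α = ⟨v, A v⟩, and assume α > 0, τ > 0 and Nα > τ. If A − ((τ − α)/(N − 1))·𝟙 and α·𝟙 − A are both positive semidefinite, then the Choi matrix Z_A = (1/α)·A ⊗ P + (1/(N/τ − 1/α))·(𝟙 − A/α) ⊗ (𝟙/τ − P/α) is positive semidefinite. -/

import Mathlib

/-!
Writing `c = (τ - α)/(N - 1)`, the Choi matrix splits as
`Z_A = ((N - 1)/(Nα - τ)) (A - c𝟙) ⊗ P + (1/(Nα - τ)) (α𝟙 - A) ⊗ (𝟙 - P)`,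
an identity of bilinear expressions in `A` and `P` alone. Since `P` is an orthogonal projection,
`P` and `𝟙 - P` are positive semidefinite, so both summands are nonnegative multiples of Kronecker
products of positive semidefinite matrices.
-/

open Matrix Kronecker ComplexOrder

namespace Matrix

variable {l m n p R : Type*} [NonUnitalNonAssocRing R]

theorem sub_kronecker (A₁ A₂ : Matrix l m R) (B : Matrix n p R) :
    (A₁ - A₂) ⊗ₖ B = A₁ ⊗ₖ B - A₂ ⊗ₖ B := by
  ext; simp [sub_mul]

theorem kronecker_sub (A : Matrix l m R) (B₁ B₂ : Matrix n p R) :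
    A ⊗ₖ (B₁ - B₂) = A ⊗ₖ B₁ - A ⊗ₖ B₂ := by
  ext; simp [mul_sub]

end Matrix

theorem choi_eq_smul_kronecker_add_smul_kronecker {n m : Type*} [DecidableEq n] [DecidableEq m]
    (A : Matrix n n ℂ) (P : Matrix m m ℂ) {N τ α : ℝ} (hN : N - 1 ≠ 0) (hτ : τ ≠ 0) (hα : α ≠ 0)
    (hNα : N * α - τ ≠ 0) :
    (α : ℂ)⁻¹ • (A ⊗ₖ P) +
        (((N / τ - 1 / α : ℝ) : ℂ))⁻¹ •
          ((1 - (α : ℂ)⁻¹ • A) ⊗ₖ ((τ : ℂ)⁻¹ • 1 - (α : ℂ)⁻¹ • P)) =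
      (((N - 1) / (N * α - τ) : ℝ) : ℂ) • ((A - (((τ - α) / (N - 1) : ℝ) : ℂ) • 1) ⊗ₖ P) +
        (((N * α - τ)⁻¹ : ℝ) : ℂ) • (((α : ℂ) • 1 - A) ⊗ₖ (1 - P)) := by
  have hN' : (N : ℂ) - 1 ≠ 0 := by exact_mod_cast hN
  have hτ' : (τ : ℂ) ≠ 0 := by exact_mod_cast hτ
  have hα' : (α : ℂ) ≠ 0 := by exact_mod_cast hα
  -- the form in which `field_simp` meets this denominator
  have hαN : (α : ℂ) * N - τ ≠ 0 := by rw [mul_comm]; exact_mod_cast hNα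
  simp only [sub_kronecker, kronecker_sub, smul_kronecker, kronecker_smul, smul_sub, smul_smul]
  push_cast
  match_scalars <;> field_simp <;> ring

variable {n 𝕜 : Type*} [Fintype n] [RCLike 𝕜]

theorem isStarProjection_vecMulVec_star_self {v : n → 𝕜} (hv : star v ⬝ᵥ v = 1) :
    IsStarProjection (vecMulVec (star v) v) where
  isIdempotentElem := by
    rw [IsIdempotentElem, vecMulVec_mul_vecMulVec, dotProduct_comm, hv, one_smul]
  isSelfAdjoint := by
    simp [IsSelfAdjoint, star_eq_conjTranspose, conjTranspose_vecMulVec]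

open scoped MatrixOrder in
theorem IsStarProjection.posSemidef [DecidableEq n] {P : Matrix n n 𝕜}
    (hP : IsStarProjection P) : P.PosSemidef :=
  hP.nonneg.posSemidef

theorem choi_posSemidef_of_bounds_general (N : ℕ) (hN : 2 ≤ N)
    (A : Matrix (Fin N) (Fin N) ℂ)
    (v : Fin N → ℂ) (hv : star v ⬝ᵥ v = 1)
    (τ α : ℝ)
    (hα0 : 0 < α) (hτ0 : 0 < τ) (hNα : τ < (N : ℝ) * α)
    (P : Matrix (Fin N) (Fin N) ℂ) (hP : P = vecMulVec (star v) v)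
    (Z : Matrix (Fin N × Fin N) (Fin N × Fin N) ℂ)
    (hZ : Z = ((α : ℂ))⁻¹ • (A ⊗ₖ P) +
      ((((N : ℝ) / τ - 1 / α : ℝ) : ℂ))⁻¹ •
        ((1 - ((α : ℂ))⁻¹ • A) ⊗ₖ (((τ : ℂ))⁻¹ • 1 - ((α : ℂ))⁻¹ • P)))
    (hlow : (A - ((((τ - α) / ((N : ℝ) - 1)) : ℝ) : ℂ) • 1).PosSemidef)
    (hupp : (((α : ℝ) : ℂ) • 1 - A).PosSemidef) :
    Z.PosSemidef := by
  have hN1 : (1 : ℝ) < N := by exact_mod_cast hN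
  have hD : 0 < (N : ℝ) * α - τ := by linarith
  have hPproj : IsStarProjection P := hP ▸ isStarProjection_vecMulVec_star_self hv
  rw [hZ, choi_eq_smul_kronecker_add_smul_kronecker A P (by linarith) hτ0.ne' hα0.ne' hD.ne']
  refine ((hlow.kronecker hPproj.posSemidef).smul ?_).add
    ((hupp.kronecker hPproj.one_sub.posSemidef).smul ?_)
  · exact Complex.zero_le_real.mpr (div_nonneg (by linarith) hD.le)
  · exact Complex.zero_le_real.mpr (inv_nonneg.mpr hD.le)

/-- If `A − ((τ − α)/(N − 1))·𝟙` and `α·𝟙 − A` are both positive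
semidefinite then the Choi matrix `Z_A` is positive semidefinite. -/
theorem choi_posSemidef_of_bounds (N : ℕ) (hN : 2 ≤ N)
    (A : Matrix (Fin N) (Fin N) ℂ) (hA : A.IsHermitian)
    (v : Fin N → ℂ) (hv : star v ⬝ᵥ v = 1)
    (τ α : ℝ) (hτ : A.trace = (τ : ℂ)) (hα : star v ⬝ᵥ A.mulVec v = (α : ℂ))
    (hα0 : 0 < α) (hτ0 : 0 < τ) (hNα : τ < (N : ℝ) * α)
    (P : Matrix (Fin N) (Fin N) ℂ) (hP : P = vecMulVec (star v) v)
    (Z : Matrix (Fin N × Fin N) (Fin N × Fin N) ℂ)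
    (hZ : Z = ((α : ℂ))⁻¹ • (A ⊗ₖ P) +
      ((((N : ℝ) / τ - 1 / α : ℝ) : ℂ))⁻¹ •
        ((1 - ((α : ℂ))⁻¹ • A) ⊗ₖ (((τ : ℂ))⁻¹ • 1 - ((α : ℂ))⁻¹ • P)))
    (hlow : (A - ((((τ - α) / ((N : ℝ) - 1)) : ℝ) : ℂ) • 1).PosSemidef)
    (hupp : (((α : ℝ) : ℂ) • 1 - A).PosSemidef) :
    Z.PosSemidef :=
  choi_posSemidef_of_bounds_general N hN A v hv τ α hα0 hτ0 hNα P hP Z hZ hlow hupp
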